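/- Let Γ be a finite tree on [n] rooted at v, let i be a vertex and let u < i. Then the set Γ^v_{< i} \ Γ^v_{≥ u} is the disjoint union of the sets I_x, taken over all pairs (w, x) where w ranges over vertices with u ≤ w ≤ i and x ranges over children of w with x not ≥ u. -/

import Mathlib

open SimpleGraph

/-- `tle G v x y` : `x ≤ y` in the tree rooted at `v`, i.e. `y` lies on the
(unique) path from `x` to the root `v`. -/
def tle {n : ℕ} (G : SimpleGraph (Fin n)) (v x y : Fin n) : Prop :=
  ∀ p : G.Path x v, y ∈ p.1.support

/-- strict order -/
def tlt {n : ℕ} (G : SimpleGraph (Fin n)) (v x y : Fin n) : Prop :=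
  tle G v x y ∧ x ≠ y

/-- `I_x` : the set of vertices `y ≤ x`, the subtree hanging below `x`. -/
def Iset {n : ℕ} (G : SimpleGraph (Fin n)) (v x : Fin n) : Set (Fin n) :=
  {y | tle G v y x}

/-- `covRel G v x y` : `y` covers `x` (`x ⋖ y`), i.e. they are adjacent and `x < y`. -/
def covRel {n : ℕ} (G : SimpleGraph (Fin n)) (v x y : Fin n) : Prop :=
  G.Adj x y ∧ tlt G v x y


/-- Index set: pairs (w, x) with u ≤ w ≤ i, x a child of w, and x not ≥ u. -/
def pairSet {n : ℕ} (G : SimpleGraph (Fin n)) (v i u : Fin n) : Set (Fin n × Fin n) :=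
  {p | tle G v u p.1 ∧ tle G v p.1 i ∧ covRel G v p.2 p.1 ∧ ¬ tle G v u p.2}

section aux
variable {n : ℕ} {G : SimpleGraph (Fin n)} (hT : G.IsTree) (v : Fin n)
include hT

noncomputable def thePath (x : Fin n) : G.Walk x v :=
  (hT.existsUnique_path x v).exists.choose

lemma thePath_isPath (x : Fin n) : (thePath hT v x).IsPath :=
  (hT.existsUnique_path x v).exists.choose_spec

lemma thePath_unique {x : Fin n} (p : G.Walk x v) (hp : p.IsPath) : p = thePath hT v x :=
  (hT.existsUnique_path x v).unique hp (thePath_isPath hT v x)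

lemma tle_iff {x y : Fin n} : tle G v x y ↔ y ∈ (thePath hT v x).support := by
  constructor
  · intro h; exact h ⟨thePath hT v x, thePath_isPath hT v x⟩
  · intro h p; rwa [thePath_unique hT v p.1 p.2]

lemma thePath_drop {x y : Fin n} (h : y ∈ (thePath hT v x).support) :
    (thePath hT v x).dropUntil y h = thePath hT v y :=
  thePath_unique hT v _ ((thePath_isPath hT v x).dropUntil h)

lemma tle_refl (x : Fin n) : tle G v x x := by
  rw [tle_iff hT]; exact Walk.start_mem_support _

lemma tle_trans {x y z : Fin n} (h1 : tle G v x y) (h2 : tle G v y z) : tle G v x z := by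
  rw [tle_iff hT] at h1 h2 ⊢
  rw [← thePath_drop hT v h1] at h2
  exact Walk.support_dropUntil_subset _ _ h2

lemma tle_antisymm {x y : Fin n} (h1 : tle G v x y) (h2 : tle G v y x) : x = y := by
  rw [tle_iff hT] at h1 h2
  have e1 := congrArg Walk.length ((thePath hT v x).take_spec h1)
  have e2 := congrArg Walk.length ((thePath hT v y).take_spec h2)
  rw [Walk.length_append, thePath_drop hT v h1] at e1
  rw [Walk.length_append, thePath_drop hT v h2] at e2
  have : ((thePath hT v x).takeUntil y h1).length = 0 := by omega
  exact Walk.eq_of_length_eq_zero this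

/-- if x ⋖ w then the path from x is cons of path from w -/
lemma thePath_cov {x w : Fin n} (h : covRel G v x w) :
    thePath hT v x = Walk.cons h.1 (thePath hT v w) := by
  refine (thePath_unique hT v _ ?_).symm
  refine (thePath_isPath hT v w).cons ?_
  intro hx
  exact h.2.2 (tle_antisymm hT v h.2.1 ((tle_iff hT v).2 hx))

lemma cov_unique {x w w' : Fin n} (h : covRel G v x w) (h' : covRel G v x w') : w = w' := by
  have e := (thePath_cov hT v h).symm.trans (thePath_cov hT v h')
  have e2 := congrArg Walk.support e
  rw [Walk.support_cons, Walk.support_cons, Walk.support_eq_cons (thePath hT v w),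
    Walk.support_eq_cons (thePath hT v w')] at e2
  simp at e2
  rw [Walk.support_eq_cons (thePath hT v w), Walk.support_eq_cons (thePath hT v w')] at e2
  exact (List.cons.inj e2).1

lemma thePath_nil : thePath hT v v = Walk.nil :=
  (thePath_unique hT v Walk.nil (by simp)).symm

lemma thePath_step {y : Fin n} (hy : y ≠ v) :
    ∃ (y' : Fin n) (adj : G.Adj y y'), thePath hT v y = Walk.cons adj (thePath hT v y') := by
  have hp := thePath_isPath hT v y
  have key : ∀ (p : G.Walk y v), p.IsPath → ∃ (y' : Fin n) (adj : G.Adj y y'),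
      p = Walk.cons adj (thePath hT v y') := by
    intro p hp
    cases p with
    | nil => exact absurd rfl hy
    | cons adj q => exact ⟨_, adj, by rw [thePath_unique hT v q hp.of_cons]⟩
  obtain ⟨y', adj, h⟩ := key _ hp
  exact ⟨y', adj, h⟩

lemma tle_comparable {y a b : Fin n} (ha : tle G v y a) (hb : tle G v y b) :
    tle G v a b ∨ tle G v b a := by
  rw [tle_iff hT] at ha hb
  have key : ∀ (k : ℕ) (y : Fin n), (thePath hT v y).length ≤ k →
      a ∈ (thePath hT v y).support → b ∈ (thePath hT v y).support →
      tle G v a b ∨ tle G v b a := by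
    intro k
    induction k with
    | zero =>
      intro y hk ha hb
      have hyv : y = v := Walk.eq_of_length_eq_zero (Nat.le_zero.1 hk)
      rw [hyv, thePath_nil hT v] at ha hb
      simp at ha hb
      rw [ha, hb]
      exact Or.inl (tle_refl hT v v)
    | succ k ih =>
      intro y hk ha hb
      by_cases hyv : y = v
      · rw [hyv, thePath_nil hT v] at ha hb
        simp at ha hb
        rw [ha, hb]
        exact Or.inl (tle_refl hT v v)
      · obtain ⟨y', adj, heq⟩ := thePath_step hT v hyv
        have ha0 := ha
        have hb0 := hb
        rw [heq, Walk.support_cons] at ha hb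
        rcases List.mem_cons.1 ha with rfl | ha'
        · exact Or.inl ((tle_iff hT v).2 hb0)
        rcases List.mem_cons.1 hb with rfl | hb'
        · exact Or.inr ((tle_iff hT v).2 ha0)
        have hlen : (thePath hT v y').length ≤ k := by
          have := congrArg Walk.length heq
          rw [Walk.length_cons] at this
          omega
        exact ih y' hlen ha' hb'
  exact key _ y le_rfl ha hb

lemma find_pair {i u : Fin n} (hui : tle G v u i) :
    ∀ (k : ℕ) (y : Fin n), (thePath hT v y).length ≤ k → ¬ tle G v u y → tle G v y i →
      ∃ w x, (w, x) ∈ pairSet G v i u ∧ tle G v y x := by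
  intro k
  induction k with
  | zero =>
    intro y hk hnu hyi
    have hyv : y = v := Walk.eq_of_length_eq_zero (Nat.le_zero.1 hk)
    rw [tle_iff hT, hyv, thePath_nil hT v] at hyi
    simp at hyi
    exact absurd (show tle G v u y by rw [hyv]; exact hyi ▸ hui) hnu
  | succ k ih =>
    intro y hk hnu hyi
    by_cases hyv : y = v
    · rw [tle_iff hT, hyv, thePath_nil hT v] at hyi
      simp at hyi
      exact absurd (show tle G v u y by rw [hyv]; exact hyi ▸ hui) hnu
    · obtain ⟨d, adj, heq⟩ := thePath_step hT v hyv
      have hcd : tle G v y d := by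
        rw [tle_iff hT, heq, Walk.support_cons]
        right; exact Walk.start_mem_support _
      have hic : i ≠ y := fun h => hnu (h ▸ hui)
      have hdi : tle G v d i := by
        have h2 := (tle_iff hT v).1 hyi
        rw [heq, Walk.support_cons] at h2
        rcases List.mem_cons.1 h2 with h | h
        · exact absurd h hic
        · rw [tle_iff hT]; exact h
      by_cases hud : tle G v u d
      · exact ⟨d, y, ⟨hud, hdi, ⟨adj, hcd, adj.ne⟩, hnu⟩, tle_refl hT v y⟩
      · have hlen : (thePath hT v d).length ≤ k := by
          have := congrArg Walk.length heq
          rw [Walk.length_cons] at this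
          omega
        obtain ⟨w, x, hwx, hdx⟩ := ih d hlen hud hdi
        exact ⟨w, x, hwx, tle_trans hT v hcd hdx⟩


end aux

/-- The set of vertices strictly below i and not above u is the disjoint union of
the subtree sets of children x of vertices w with u ≤ w ≤ i, where x is not ≥ u. -/
theorem lt_diff_ge_eq_iUnion {n : ℕ} (G : SimpleGraph (Fin n)) (hT : G.IsTree)
    (v i u : Fin n) (hu : tlt G v u i) :
    ({y | tlt G v y i} \ {y | tle G v u y} = ⋃ p ∈ pairSet G v i u, Iset G v p.2) ∧
    Set.PairwiseDisjoint (pairSet G v i u) (fun p => Iset G v p.2) := by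
  constructor
  · ext y
    simp only [Set.mem_diff, Set.mem_setOf_eq, Set.mem_iUnion]
    constructor
    · rintro ⟨⟨hyi, _⟩, hnu⟩
      obtain ⟨w, x, hwx, hyx⟩ := find_pair hT v hu.1 (thePath hT v y).length y le_rfl hnu hyi
      exact ⟨(w, x), hwx, hyx⟩
    · rintro ⟨⟨w, x⟩, ⟨huw, hwi, ⟨hadj, hxw, hxwne⟩, hnux⟩, hyx⟩
      have hyx' : tle G v y x := hyx
      have hxi : tle G v x i := tle_trans hT v hxw hwi
      have hyi : tle G v y i := tle_trans hT v hyx' hxi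
      refine ⟨⟨hyi, ?_⟩, ?_⟩
      · rintro rfl
        have : x = y := tle_antisymm hT v hxi hyx'
        subst this
        exact hxwne (tle_antisymm hT v hxw (tle_trans hT v hwi hyx'))
      · intro huy
        exact hnux (tle_trans hT v huy hyx')
  · rintro ⟨w1, x1⟩ h1 ⟨w2, x2⟩ h2 hne
    obtain ⟨hu1, hi1, hc1, hn1⟩ := h1
    obtain ⟨hu2, hi2, hc2, hn2⟩ := h2
    simp only [Set.disjoint_left]
    intro y hy1 hy2
    have hy1' : tle G v y x1 := hy1
    have hy2' : tle G v y x2 := hy2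
    have key : ∀ a b wa wb : Fin n, covRel G v a wa → covRel G v b wb →
        tle G v u wa → ¬ tle G v u b → tle G v a b → a = b := by
      intro a b wa wb hca hcb huwa hnub hab
      by_contra hab'
      apply hnub
      have hbwa : tle G v wa b := by
        have := (tle_iff hT v).1 hab
        rw [thePath_cov hT v hca, Walk.support_cons] at this
        rcases List.mem_cons.1 this with h | h
        · exact absurd h.symm hab'
        · rw [tle_iff hT]; exact h
      exact tle_trans hT v huwa hbwa
    rcases tle_comparable hT v hy1' hy2' with h | h
    · have := key x1 x2 w1 w2 hc1 hc2 hu1 hn2 h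
      subst this
      exact hne (Prod.ext (cov_unique hT v hc1 hc2) rfl)
    · have := key x2 x1 w2 w1 hc2 hc1 hu2 hn1 h
      subst this
      exact hne (Prod.ext (cov_unique hT v hc1 hc2) rfl)
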